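/- Define F : (−1,1)³ → ℝ by F(a,b,c) = (1/2)·log(1+a) + (1/2)·log(1−a) + (1/3)·log(1+b) + (1/6)·log(1−b) + (1/6)·log(1+c) + (1/3)·log(1−c). Then (a*, b*, c*) = (0, 1/3, −1/3) is the unique maximizer of F on (−1,1)³, and F(0, 1/3, −1/3) = (1/3)·log(32/27). -/
import Mathlib

lemma aux_f {a : ℝ} (h1 : -1 < a) (h2 : a < 1) :
    (1/2) * Real.log (1+a) + (1/2) * Real.log (1-a) ≤ 0 ∧
    (a ≠ 0 → (1/2) * Real.log (1+a) + (1/2) * Real.log (1-a) < 0) := by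
  have ha : (0:ℝ) < 1 + a := by linarith
  have hb : (0:ℝ) < 1 - a := by linarith
  have e : (1/2) * Real.log (1+a) + (1/2) * Real.log (1-a)
      = (1/2) * Real.log ((1+a)*(1-a)) := by
    rw [Real.log_mul ha.ne' hb.ne']; ring
  constructor
  · rw [e]
    have : Real.log ((1+a)*(1-a)) ≤ 0 :=
      Real.log_nonpos (by positivity) (by nlinarith [sq_nonneg a])
    linarith
  · intro hne
    rw [e]
    have hsq : 0 < a^2 := by positivity
    have : Real.log ((1+a)*(1-a)) < 0 := Real.log_neg (by positivity) (by nlinarith)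
    linarith

lemma aux_g {b : ℝ} (h1 : -1 < b) (h2 : b < 1) :
    (1/3) * Real.log (1+b) + (1/6) * Real.log (1-b)
      ≤ (1/3) * Real.log (4/3) + (1/6) * Real.log (2/3) ∧
    (b ≠ 1/3 → (1/3) * Real.log (1+b) + (1/6) * Real.log (1-b)
      < (1/3) * Real.log (4/3) + (1/6) * Real.log (2/3)) := by
  have hx : (0:ℝ) < 3*(1+b)/4 := by linarith
  have hy : (0:ℝ) < 3*(1-b)/2 := by linarith
  have e1 : Real.log (1+b) = Real.log (4/3) + Real.log (3*(1+b)/4) := by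
    rw [← Real.log_mul (by norm_num) hx.ne']; congr 1; ring
  have e2 : Real.log (1-b) = Real.log (2/3) + Real.log (3*(1-b)/2) := by
    rw [← Real.log_mul (by norm_num) hy.ne']; congr 1; ring
  have l1 := Real.log_le_sub_one_of_pos hx
  have l2 := Real.log_le_sub_one_of_pos hy
  constructor
  · rw [e1, e2]; linarith
  · intro hne
    have hx1 : 3*(1+b)/4 ≠ 1 := by
      intro h; apply hne; linarith
    have l1' := Real.log_lt_sub_one_of_pos hx hx1
    rw [e1, e2]; linarith

lemma aux_h {c : ℝ} (h1 : -1 < c) (h2 : c < 1) :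
    (1/6) * Real.log (1+c) + (1/3) * Real.log (1-c)
      ≤ (1/3) * Real.log (4/3) + (1/6) * Real.log (2/3) ∧
    (c ≠ -(1/3) → (1/6) * Real.log (1+c) + (1/3) * Real.log (1-c)
      < (1/3) * Real.log (4/3) + (1/6) * Real.log (2/3)) := by
  have hx : (0:ℝ) < 3*(1-c)/4 := by linarith
  have hy : (0:ℝ) < 3*(1+c)/2 := by linarith
  have e1 : Real.log (1-c) = Real.log (4/3) + Real.log (3*(1-c)/4) := by
    rw [← Real.log_mul (by norm_num) hx.ne']; congr 1; ring
  have e2 : Real.log (1+c) = Real.log (2/3) + Real.log (3*(1+c)/2) := by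
    rw [← Real.log_mul (by norm_num) hy.ne']; congr 1; ring
  have l1 := Real.log_le_sub_one_of_pos hx
  have l2 := Real.log_le_sub_one_of_pos hy
  constructor
  · rw [e1, e2]; linarith
  · intro hne
    have hx1 : 3*(1-c)/4 ≠ 1 := by
      intro h; apply hne; linarith
    have l1' := Real.log_lt_sub_one_of_pos hx hx1
    rw [e1, e2]; linarith

/-- The robust expected logarithmic growth for the two-flip game with uncertainty set
`P = [0,1]`: `a` is the fraction bet on heads at the first flip, `b` (resp. `c`) is the
fraction bet on heads at the second flip when the first flip was heads (resp. tails). -/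
noncomputable def twoFlipRobustELG (a b c : ℝ) : ℝ :=
  (1 / 2) * Real.log (1 + a) + (1 / 2) * Real.log (1 - a) +
    (1 / 3) * Real.log (1 + b) + (1 / 6) * Real.log (1 - b) +
    (1 / 6) * Real.log (1 + c) + (1 / 3) * Real.log (1 - c)

/-- Example 1: `(a*, b*, c*) = (0, 1/3, -1/3)` is the unique maximizer of the two-flip
robust expected logarithmic growth on `(-1,1)³`, with optimal value `(1/3)·log(32/27)`. -/
theorem two_flip_unique_maximizer :
    (∀ a b c : ℝ, a ∈ Set.Ioo (-1 : ℝ) 1 → b ∈ Set.Ioo (-1 : ℝ) 1 →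
      c ∈ Set.Ioo (-1 : ℝ) 1 → (a, b, c) ≠ ((0 : ℝ), (1 / 3 : ℝ), (-(1 / 3) : ℝ)) →
        twoFlipRobustELG a b c < twoFlipRobustELG 0 (1 / 3) (-(1 / 3))) ∧
      twoFlipRobustELG 0 (1 / 3) (-(1 / 3)) = (1 / 3) * Real.log (32 / 27) := by
  have hval : twoFlipRobustELG 0 (1/3) (-(1/3))
      = 0 + ((1/3) * Real.log (4/3) + (1/6) * Real.log (2/3))
          + ((1/3) * Real.log (4/3) + (1/6) * Real.log (2/3)) := by
    unfold twoFlipRobustELG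
    rw [show (1:ℝ) + 0 = 1 by norm_num, show (1:ℝ) - 0 = 1 by norm_num,
      show (1:ℝ) + 1/3 = 4/3 by norm_num, show (1:ℝ) - 1/3 = 2/3 by norm_num,
      show (1:ℝ) + -(1/3) = 2/3 by norm_num, show (1:ℝ) - -(1/3) = 4/3 by norm_num,
      Real.log_one]
    ring
  constructor
  · intro a b c ha hb hc hne
    obtain ⟨haL, haR⟩ := ha
    obtain ⟨hbL, hbR⟩ := hb
    obtain ⟨hcL, hcR⟩ := hc
    obtain ⟨fa_le, fa_lt⟩ := aux_f haL haR
    obtain ⟨gb_le, gb_lt⟩ := aux_g hbL hbR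
    obtain ⟨hc_le, hc_lt⟩ := aux_h hcL hcR
    have key : a ≠ 0 ∨ b ≠ 1/3 ∨ c ≠ -(1/3) := by
      by_contra h
      push_neg at h
      exact hne (by simp [h.1, h.2.1, h.2.2])
    rw [hval]
    unfold twoFlipRobustELG
    rcases key with h | h | h
    · have := fa_lt h; linarith
    · have := gb_lt h; linarith
    · have := hc_lt h; linarith
  · rw [hval]
    have h1 : Real.log (32/27 : ℝ) = 2 * Real.log (4/3) + Real.log (2/3) := by
      rw [show (32/27:ℝ) = (4/3)*(4/3)*(2/3) by norm_num,
        Real.log_mul (by norm_num) (by norm_num),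
        Real.log_mul (by norm_num) (by norm_num)]
      ring
    rw [h1]; ring
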